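/- arXiv:1904.09487 — 4 statements merged into one kernel-verified Lean document; each statement's English description precedes it below -/
import Mathlib

section
/- For an [m,k]-linear code C, the generalized Hamming weights are strictly increasing: δ₁(C) < δ₂(C) < ⋯ < δ_k(C). -/
open Set

/-- The support of a subcode: the coordinates where some codeword is nonzero. -/
noncomputable def codeSupport {ι F : Type*} [Field F] (D : Submodule F (ι → F)) : Set ι :=
  {i | ∃ v ∈ D, v i ≠ 0}

/-- The `r`-th generalized Hamming weight of a linear code `C`. -/
noncomputable def GHW {ι F : Type*} [Field F] (C : Submodule F (ι → F)) (r : ℕ) : ℕ :=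
  sInf {n | ∃ D : Submodule F (ι → F), D ≤ C ∧ Module.finrank F D = r ∧
    (codeSupport D).ncard = n}

/-! A minimizing `(r+1)`-dimensional subcode `D` has some coordinate `i` in its support; the
subcode of `D` vanishing at `i` has dimension `r`, and its support lies in that of `D`
minus `i`. Hence `δ_r < δ_{r+1}`. -/

theorem Submodule.exists_le_finrank_eq {K V : Type*} [DivisionRing K] [AddCommGroup V]
    [Module K V] (C : Submodule K V) {r : ℕ} (hr : r ≤ Module.finrank K C) :
    ∃ D : Submodule K V, D ≤ C ∧ Module.finrank K D = r := by
  obtain ⟨f, hf⟩ := exists_linearIndependent_of_le_finrank hr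
  refine ⟨(Submodule.span K (Set.range f)).map C.subtype, Submodule.map_subtype_le _ _, ?_⟩
  rw [Submodule.finrank_map_subtype_eq, finrank_span_eq_card hf, Fintype.card_fin]

section GHW

variable {ι F : Type*} [Field F]

theorem GHW_le_ncard_codeSupport {C D : Submodule F (ι → F)} (hDC : D ≤ C) :
    GHW C (Module.finrank F D) ≤ (codeSupport D).ncard :=
  Nat.sInf_le ⟨D, hDC, rfl, rfl⟩

theorem exists_ncard_codeSupport_eq_GHW {C : Submodule F (ι → F)} {r : ℕ}
    (hr : r ≤ Module.finrank F C) :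
    ∃ D : Submodule F (ι → F), D ≤ C ∧ Module.finrank F D = r ∧
      (codeSupport D).ncard = GHW C r := by
  obtain ⟨D, hDC, hD⟩ := C.exists_le_finrank_eq hr
  exact Nat.sInf_mem (s := {n | ∃ D : Submodule F (ι → F), D ≤ C ∧ Module.finrank F D = r ∧
    (codeSupport D).ncard = n}) ⟨_, D, hDC, hD, rfl⟩

theorem codeSupport_nonempty {D : Submodule F (ι → F)} (hD : D ≠ ⊥) :
    (codeSupport D).Nonempty := by
  obtain ⟨v, hvD, hv⟩ := (Submodule.ne_bot_iff D).mp hD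
  obtain ⟨i, hi⟩ := Function.ne_iff.mp hv
  exact ⟨i, v, hvD, hi⟩

/-- `{v ∈ D | v i = 0}`, written as the image of a kernel inside `D` so that rank–nullity
applies. -/
noncomputable def subcodeVanishingAt (D : Submodule F (ι → F)) (i : ι) : Submodule F (ι → F) :=
  (LinearMap.ker ((LinearMap.proj i).comp D.subtype)).map D.subtype

theorem subcodeVanishingAt_le (D : Submodule F (ι → F)) (i : ι) : subcodeVanishingAt D i ≤ D :=
  Submodule.map_subtype_le _ _

theorem codeSupport_subcodeVanishingAt_subset (D : Submodule F (ι → F)) (i : ι) :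
    codeSupport (subcodeVanishingAt D i) ⊆ codeSupport D \ {i} := by
  rintro j ⟨_, ⟨w, hw, rfl⟩, hwj⟩
  refine ⟨⟨w, w.2, hwj⟩, fun hji => hwj ?_⟩
  rw [Set.mem_singleton_iff.mp hji]
  exact hw

theorem finrank_subcodeVanishingAt_add_one {D : Submodule F (ι → F)} [FiniteDimensional F D]
    {i : ι} (hi : i ∈ codeSupport D) :
    Module.finrank F (subcodeVanishingAt D i) + 1 = Module.finrank F D := by
  obtain ⟨v, hvD, hvi⟩ := hi
  have hne : (LinearMap.proj i).comp D.subtype ≠ 0 :=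
    fun h => hvi (LinearMap.congr_fun h ⟨v, hvD⟩)
  rw [subcodeVanishingAt, Submodule.finrank_map_subtype_eq]
  exact Module.Dual.finrank_ker_add_one_of_ne_zero hne

theorem GHW_lt_GHW_succ [Finite ι] (C : Submodule F (ι → F)) {r : ℕ}
    (hr : r + 1 ≤ Module.finrank F C) : GHW C r < GHW C (r + 1) := by
  obtain ⟨D, hDC, hD, hDcard⟩ := exists_ncard_codeSupport_eq_GHW hr
  have : FiniteDimensional F D := Module.finite_of_finrank_eq_succ hD
  obtain ⟨i, hi⟩ := codeSupport_nonempty (Submodule.one_le_finrank_iff.mp (by rw [hD]; omega))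
  have hrank : Module.finrank F (subcodeVanishingAt D i) = r := by
    have := finrank_subcodeVanishingAt_add_one hi
    omega
  calc GHW C r ≤ (codeSupport (subcodeVanishingAt D i)).ncard :=
        hrank ▸ GHW_le_ncard_codeSupport ((subcodeVanishingAt_le D i).trans hDC)
    _ ≤ (codeSupport D \ {i}).ncard :=
        Set.ncard_le_ncard (codeSupport_subcodeVanishingAt_subset D i) (Set.toFinite _)
    _ < (codeSupport D).ncard := Set.ncard_sdiff_singleton_lt_of_mem hi (Set.toFinite _)
    _ = GHW C (r + 1) := hDcard

end GHW

theorem stmt3_general {m k : ℕ} {F : Type*} [Field F]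
    (C : Submodule F (Fin m → F)) (hk : Module.finrank F C = k)
    (r : ℕ) (hrk : r < k) :
    GHW C r < GHW C (r + 1) :=
  GHW_lt_GHW_succ C (hk ▸ hrk)

theorem stmt3 {m k : ℕ} {F : Type*} [Field F] [Fintype F]
    (C : Submodule F (Fin m → F)) (hk : Module.finrank F C = k)
    (r : ℕ) (hr : 1 ≤ r) (hrk : r < k) :
    GHW C r < GHW C (r + 1) :=
  stmt3_general C hk r hrk
end

section
/- Let M be a matroid on ground set E with nullity function η. For 1 ≤ r ≤ η(E), the r-th generalized Hamming weight d_r(M) = min{|X| : η(X) = r} equals the minimum cardinality of a union of r non-redundant circuits of M. -/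
/-!
If `X` has nullity `r` and `I` is a basis of `X`, the fundamental circuits of the `r` elements of
`X \ I` with respect to `I` lie in `X`, and each contains exactly one element of `X \ I`, so they
form a non-redundant family. Conversely, non-redundant circuits `C₁, …, Cᵣ` have private elements
`eⱼ ∈ Cⱼ`; each `eⱼ` is spanned by `Cⱼ \ {eⱼ}`, which avoids all private elements, so a basis of the
union minus the private elements is a basis of the whole union and the nullity of the union is at
least `r`. Enlarging a basis of a set by some of the remaining elements realises every smaller
nullity by a subset, so both minima agree.
-/

open Set

/-- The rank of a set in a matroid: the largest cardinality of an independent subset. -/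
noncomputable def mrank {α : Type*} (M : Matroid α) (X : Set α) : ℕ :=
  sSup {n | ∃ I ⊆ X, M.Indep I ∧ I.ncard = n}

/-- The nullity of a set in a matroid. -/
noncomputable def mnullity {α : Type*} (M : Matroid α) (X : Set α) : ℕ :=
  X.ncard - mrank M X

/-- A circuit of a matroid: a minimal dependent set. -/
def IsMCircuit {α : Type*} (M : Matroid α) (C : Set α) : Prop :=
  M.Dep C ∧ ∀ D ⊂ C, ¬ M.Dep D

/-- A family of circuits is non-redundant if deleting any member strictly shrinks the union. -/
def NonRedundant {α : Type*} {r : ℕ} (C : Fin r → Set α) : Prop :=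
  ∀ j, (⋃ i, ⋃ (_ : i ≠ j), C i) ⊂ ⋃ i, C i

theorem Nat.sInf_le_sInf_of_forall_exists_le {S T : Set ℕ} (hS : S.Nonempty)
    (h : ∀ n ∈ S, ∃ m ∈ T, m ≤ n) : sInf T ≤ sInf S := by
  obtain ⟨m, hmT, hm⟩ := h _ (Nat.sInf_mem hS)
  exact (Nat.sInf_le hmT).trans hm

theorem Nat.sInf_eq_sInf_of_forall_exists_le {S T : Set ℕ}
    (hST : ∀ n ∈ S, ∃ m ∈ T, m ≤ n) (hTS : ∀ m ∈ T, ∃ n ∈ S, n ≤ m) : sInf S = sInf T := by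
  rcases S.eq_empty_or_nonempty with rfl | hS
  · have hT : T = ∅ := eq_empty_of_forall_notMem fun m hm ↦ by simpa using hTS m hm
    rw [hT]
  · obtain ⟨m, hmT, -⟩ := hST _ hS.some_mem
    exact le_antisymm (Nat.sInf_le_sInf_of_forall_exists_le ⟨m, hmT⟩ hTS)
      (Nat.sInf_le_sInf_of_forall_exists_le hS hST)

theorem nonRedundant_iff {α : Type*} {r : ℕ} {C : Fin r → Set α} :
    NonRedundant C ↔ ∃ e : Fin r → α, ∀ i j, e j ∈ C i ↔ i = j := by
  constructor
  · intro h
    have hprivate : ∀ j, ∃ x, ∀ i, x ∈ C i ↔ i = j := fun j ↦ by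
      obtain ⟨x, hxU, hx⟩ := exists_of_ssubset (h j)
      simp only [mem_iUnion, not_exists] at hxU hx
      have hxj : ∀ i, x ∈ C i → i = j := fun i hi ↦ by_contra fun hij ↦ hx i hij hi
      obtain ⟨k, hk⟩ := hxU
      exact ⟨x, fun i ↦ ⟨hxj i, fun hij ↦ hij ▸ hxj k hk ▸ hk⟩⟩
    choose e he using hprivate
    exact ⟨e, fun i j ↦ he j i⟩
  · rintro ⟨e, he⟩ j
    refine ssubset_of_subset_not_subset
      (iUnion_subset fun i ↦ iUnion_subset fun _ ↦ subset_iUnion C i) fun hsub ↦ ?_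
    obtain ⟨i, hij, hi⟩ : ∃ i, i ≠ j ∧ e j ∈ C i := by
      simpa using hsub (mem_iUnion_of_mem j ((he j j).2 rfl))
    exact hij ((he i j).1 hi)

namespace Matroid

variable {α : Type*} {M : Matroid α} {I X : Set α}

theorem isMCircuit_iff_isCircuit {C : Set α} : IsMCircuit M C ↔ M.IsCircuit C := by
  rw [isCircuit_iff_forall_ssubset, IsMCircuit]
  refine and_congr_right fun hC ↦ forall₂_congr fun D hDC ↦ ?_
  rw [not_dep_iff (hDC.subset.trans hC.subset_ground)]

theorem IsBasis'.mrank_eq_ncard [M.RankFinite] (hI : M.IsBasis' I X) : mrank M X = I.ncard := by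
  refine IsGreatest.csSup_eq ⟨⟨I, hI.subset, hI.indep, rfl⟩, ?_⟩
  rintro _ ⟨J, hJX, hJ, rfl⟩
  have hJI : J.encard ≤ I.encard := hI.encard_eq_eRk ▸ hJ.encard_le_eRk_of_subset hJX
  rw [← Nat.cast_le (α := ℕ∞), hJ.finite.cast_ncard_eq, hI.indep.finite.cast_ncard_eq]
  exact hJI

theorem IsBasis'.mnullity_eq_ncard_sdiff [M.RankFinite] (hI : M.IsBasis' I X) :
    mnullity M X = (X \ I).ncard := by
  rw [mnullity, hI.mrank_eq_ncard, ncard_sdiff hI.subset hI.indep.finite]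

theorem exists_subset_mnullity_eq [M.RankFinite] {k : ℕ} (hX : X ⊆ M.E)
    (hk : k ≤ mnullity M X) : ∃ Y ⊆ X, mnullity M Y = k := by
  obtain ⟨I, hI⟩ := M.exists_isBasis X
  rw [hI.isBasis'.mnullity_eq_ncard_sdiff] at hk
  obtain ⟨Z, hZ, rfl⟩ := exists_subset_card_eq hk
  have hIZ : M.IsBasis I (I ∪ Z) :=
    hI.isBasis_subset subset_union_left (union_subset hI.subset (hZ.trans sdiff_subset))
  refine ⟨I ∪ Z, union_subset hI.subset (hZ.trans sdiff_subset), ?_⟩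
  rw [hIZ.isBasis'.mnullity_eq_ncard_sdiff, union_sdiff_left,
    sdiff_eq_left.mpr (disjoint_of_subset_left hZ disjoint_sdiff_left)]

theorem ncard_le_mnullity_of_subset_closure [M.Finite] {P : Set α} (hX : X ⊆ M.E)
    (hPX : P ⊆ X) (hP : P ⊆ M.closure (X \ P)) : P.ncard ≤ mnullity M X := by
  obtain ⟨I, hI⟩ := M.exists_isBasis (X \ P) (sdiff_subset.trans hX)
  have hXI : X ⊆ M.closure I := fun x hx ↦ by
    rw [hI.closure_eq_closure]
    by_cases hxP : x ∈ P
    · exact hP hxP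
    · exact M.subset_closure _ (sdiff_subset.trans hX) ⟨hx, hxP⟩
  have hIX : M.IsBasis I X :=
    hI.indep.isBasis_of_subset_of_subset_closure (hI.subset.trans sdiff_subset) hXI
  rw [hIX.isBasis'.mnullity_eq_ncard_sdiff]
  exact ncard_le_ncard (fun x hx ↦ ⟨hPX hx, fun hxI ↦ (hI.subset hxI).2 hx⟩)
    (M.set_finite X hX).sdiff

theorem le_mnullity_iUnion_of_nonRedundant [M.Finite] {r : ℕ} {C : Fin r → Set α}
    (hC : ∀ i, M.IsCircuit (C i)) (hNR : NonRedundant C) : r ≤ mnullity M (⋃ i, C i) := by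
  obtain ⟨e, he⟩ := nonRedundant_iff.mp hNR
  have he_inj : e.Injective := fun i j hij ↦ (he i j).1 (hij ▸ (he i i).2 rfl)
  have hCe : ∀ j, C j \ {e j} ⊆ (⋃ i, C i) \ range e := by
    rintro j x ⟨hxC, hxe⟩
    refine ⟨mem_iUnion_of_mem j hxC, ?_⟩
    rintro ⟨i, rfl⟩
    exact hxe ((he j i).1 hxC ▸ rfl)
  have hr : (range e).ncard = r := by rw [ncard_range_of_injective he_inj, Nat.card_fin]
  refine hr.ge.trans <| ncard_le_mnullity_of_subset_closure
    (iUnion_subset fun i ↦ (hC i).subset_ground)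
    (range_subset_iff.mpr fun j ↦ mem_iUnion_of_mem j ((he j j).2 rfl)) ?_
  rintro _ ⟨j, rfl⟩
  exact M.closure_subset_closure (hCe j)
    ((hC j).mem_closure_sdiff_singleton_of_mem ((he j j).2 rfl))

theorem exists_nonRedundant_isCircuit_family [M.Finite] {r : ℕ} (hX : X ⊆ M.E)
    (hr : mnullity M X = r) :
    ∃ C : Fin r → Set α, (∀ i, M.IsCircuit (C i)) ∧ NonRedundant C ∧ ⋃ i, C i ⊆ X := by
  obtain ⟨I, hI⟩ := M.exists_isBasis X
  have : Finite ↥(X \ I) := (M.set_finite X hX).sdiff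
  rw [hI.isBasis'.mnullity_eq_ncard_sdiff] at hr
  let e : Fin r ≃ ↥(X \ I) := (Finite.equivFinOfCardEq hr).symm
  refine ⟨fun i ↦ M.fundCircuit (e i) I,
    fun i ↦ hI.indep.fundCircuit_isCircuit (hI.subset_closure (e i).2.1) (e i).2.2,
    nonRedundant_iff.mpr ⟨fun i ↦ e i, fun i j ↦ ⟨fun h ↦ ?_, fun h ↦ h ▸ M.mem_fundCircuit _ _⟩⟩,
    iUnion_subset fun i ↦ (M.fundCircuit_subset_insert _ I).trans
      (insert_subset (e i).2.1 hI.subset)⟩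
  rcases M.fundCircuit_subset_insert _ I h with h | h
  · exact e.injective (Subtype.ext h).symm
  · exact absurd h (e j).2.2

end Matroid

theorem stmt5_general {α : Type*} (M : Matroid α) [M.Finite] (r : ℕ) :
    sInf {n | ∃ X ⊆ M.E, mnullity M X = r ∧ X.ncard = n} =
      sInf {n | ∃ C : Fin r → Set α, (∀ i, IsMCircuit M (C i)) ∧ NonRedundant C ∧
        (⋃ i, C i).ncard = n} := by
  simp_rw [Matroid.isMCircuit_iff_isCircuit]
  refine Nat.sInf_eq_sInf_of_forall_exists_le ?_ ?_
  · rintro _ ⟨X, hXE, hXr, rfl⟩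
    obtain ⟨C, hC, hNR, hCX⟩ := Matroid.exists_nonRedundant_isCircuit_family hXE hXr
    exact ⟨_, ⟨C, hC, hNR, rfl⟩, ncard_le_ncard hCX (M.set_finite X hXE)⟩
  · rintro _ ⟨C, hC, hNR, rfl⟩
    have hUE : ⋃ i, C i ⊆ M.E := iUnion_subset fun i ↦ (hC i).subset_ground
    obtain ⟨Y, hYU, hYr⟩ :=
      Matroid.exists_subset_mnullity_eq hUE (Matroid.le_mnullity_iUnion_of_nonRedundant hC hNR)
    exact ⟨_, ⟨Y, hYU.trans hUE, hYr, rfl⟩, ncard_le_ncard hYU (M.set_finite _ hUE)⟩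

theorem stmt5 {α : Type*} (M : Matroid α) [M.Finite] (r : ℕ) (hr : 1 ≤ r)
    (hrn : r ≤ mnullity M M.E) :
    sInf {n | ∃ X ⊆ M.E, mnullity M X = r ∧ X.ncard = n} =
      sInf {n | ∃ C : Fin r → Set α, (∀ i, IsMCircuit M (C i)) ∧ NonRedundant C ∧
        (⋃ i, C i).ncard = n} :=
  stmt5_general M r
end

section
/- Let G_σ be a signed graph with s vertices, c connected components, c₀ balanced connected components, and incidence matrix A over a field K. Then rank(A) = s − c₀ if char(K) ≠ 2, and rank(A) = s − c if char(K) = 2 or if G_σ is balanced. -/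
/-!
The rank of the incidence matrix is `|V|` minus the dimension of its left null space, the
vectors `x` with `x u = x v` along positive and `x u = -x v` along negative edges. On a connected
component such an `x` is fixed by one value and vanishes nowhere unless it vanishes identically,
so that dimension is the number of components carrying a nonzero solution. In characteristic 2
every component does (`x = 1`). Otherwise a nonzero solution on a component amounts to a
switching function `s : V → ZMod 2` making all its edges positive, and these exist exactly on
balanced components: summed over a cycle, `s u + s v` counts every vertex twice and gives the
number of negative edges mod 2; conversely, Harary's construction builds `s` edge by edge.
-/

open Classical Set

structure SignedGraph (V E : Type*) where
  ends : E → V × V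
  sign : E → Bool

namespace SignedGraph

variable {V E : Type*} (G : SignedGraph V E)

def touches (e : E) (v : V) : Prop := (G.ends e).1 = v ∨ (G.ends e).2 = v

def verts (X : Set E) : Set V := {v | ∃ e ∈ X, G.touches e v}

noncomputable def deg (X : Set E) (v : V) : ℕ :=
  ∑ᶠ e ∈ X, ((if (G.ends e).1 = v then 1 else 0) + (if (G.ends e).2 = v then 1 else 0))

def adjIn (X : Set E) (u v : V) : Prop :=
  ∃ e ∈ X, G.ends e = (u, v) ∨ G.ends e = (v, u)

def ConnSet (X : Set E) : Prop :=
  ∀ u ∈ G.verts X, ∀ v ∈ G.verts X, Relation.EqvGen (G.adjIn X) u v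

def IsCycle (C : Set E) : Prop :=
  C.Nonempty ∧ G.ConnSet C ∧ ∀ v ∈ G.verts C, G.deg C v = 2

noncomputable def negCount (C : Set E) : ℕ := {e ∈ C | G.sign e = false}.ncard

def IsBalancedCycle (C : Set E) : Prop := G.IsCycle C ∧ Even (G.negCount C)

def IsUnbalancedCycle (C : Set E) : Prop := G.IsCycle C ∧ ¬ Even (G.negCount C)

def IsPath (P : Set E) : Prop :=
  P.Nonempty ∧ G.ConnSet P ∧ (∀ e ∈ P, (G.ends e).1 ≠ (G.ends e).2) ∧
    (∀ v ∈ G.verts P, G.deg P v ≤ 2) ∧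
    {v ∈ G.verts P | G.deg P v = 1}.ncard = 2

def IsBowtie (B : Set E) : Prop :=
  (∃ C₁ C₂, G.IsUnbalancedCycle C₁ ∧ G.IsUnbalancedCycle C₂ ∧ B = C₁ ∪ C₂ ∧
      ∃ v, G.verts C₁ ∩ G.verts C₂ = {v}) ∨
  (∃ C₁ C₂ P, G.IsUnbalancedCycle C₁ ∧ G.IsUnbalancedCycle C₂ ∧ G.IsPath P ∧
      Disjoint (G.verts C₁) (G.verts C₂) ∧ B = C₁ ∪ C₂ ∪ P ∧
      (∃ v₁, G.verts P ∩ G.verts C₁ = {v₁} ∧ G.deg P v₁ = 1) ∧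
      (∃ v₂, G.verts P ∩ G.verts C₂ = {v₂} ∧ G.deg P v₂ = 1) ∧
      Disjoint P C₁ ∧ Disjoint P C₂)

def comp (X : Set E) (v : V) : Set V := {w | Relation.EqvGen (G.adjIn X) v w}

noncomputable def numComponents (X : Set E) : ℕ := {K | ∃ v, K = G.comp X v}.ncard

def BalancedComponent (X : Set E) (K : Set V) : Prop :=
  (∃ v, K = G.comp X v) ∧ ∀ C ⊆ X, G.verts C ⊆ K → G.IsCycle C → Even (G.negCount C)

noncomputable def numBalancedComponents (X : Set E) : ℕ := {K | G.BalancedComponent X K}.ncard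

def Balanced : Prop := ∀ C, G.IsCycle C → Even (G.negCount C)

def Connected : Prop := ∀ u v : V, Relation.EqvGen (G.adjIn Set.univ) u v

noncomputable def incCol (K : Type*) [Field K] (e : E) : V → K := fun v =>
  (if (G.ends e).1 = v then 1 else 0) +
    (if (G.ends e).2 = v then (if G.sign e then -1 else 1) else 0)

noncomputable def incMatrix (K : Type*) [Field K] : Matrix V E K := fun v e => G.incCol K e v

noncomputable def code (K : Type*) [Field K] : Submodule K (E → K) :=
  Submodule.span K (Set.range fun v => fun e => G.incCol K e v)

end SignedGraph

noncomputable def dotL {ι F : Type*} [Fintype ι] [Field F] (v : ι → F) : (ι → F) →ₗ[F] F where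
  toFun w := ∑ i, v i * w i
  map_add' a b := by simp [mul_add, Finset.sum_add_distrib]
  map_smul' c a := by simp [Finset.mul_sum, mul_left_comm, smul_eq_mul]

noncomputable def dualCode {ι F : Type*} [Fintype ι] [Field F]
    (C : Submodule F (ι → F)) : Submodule F (ι → F) :=
  ⨅ v ∈ C, LinearMap.ker (dotL v)

lemma SimpleGraph.reachable_fromRel_of_eqvGen {V : Type*} {r : V → V → Prop} {a b : V}
    (h : Relation.EqvGen r a b) : (SimpleGraph.fromRel r).Reachable a b := by
  induction h with
  | rel u w huw =>
    by_cases hne : u = w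
    · exact hne ▸ .refl u
    · exact SimpleGraph.Adj.reachable ((SimpleGraph.fromRel_adj _ _ _).2 ⟨hne, .inl huw⟩)
  | refl u => exact .refl u
  | symm _ _ _ ih => exact ih.symm
  | trans _ _ _ _ _ ih₁ ih₂ => exact ih₁.trans ih₂

namespace SignedGraph

variable {V E : Type*} {G : SignedGraph V E}

section Potential

variable (G) in
noncomputable def endCount (e : E) (v : V) : ℕ :=
  (if (G.ends e).1 = v then 1 else 0) + (if (G.ends e).2 = v then 1 else 0)

variable (G) in
def negBit (e : E) : ZMod 2 := if G.sign e then 0 else 1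

variable (G) in
/-- A switching function that makes every edge of `X` positive: switching the vertices where
`s = 1` flips exactly the edges whose ends have different values. -/
def IsPotential (X : Set E) (s : V → ZMod 2) : Prop :=
  ∀ e ∈ X, s (G.ends e).1 + s (G.ends e).2 = G.negBit e

lemma IsPotential.mono {X Y : Set E} {s : V → ZMod 2} (hs : G.IsPotential X s) (hYX : Y ⊆ X) :
    G.IsPotential Y s :=
  fun e he => hs e (hYX he)

lemma deg_coe_finset (P : Finset E) (v : V) : G.deg ↑P v = ∑ e ∈ P, G.endCount e v :=
  finsum_mem_coe_finset _ _

lemma deg_insert {P : Finset E} {e : E} (he : e ∉ P) (v : V) :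
    G.deg ↑(insert e P) v = G.endCount e v + G.deg ↑P v := by
  rw [deg_coe_finset, deg_coe_finset, Finset.sum_insert he]

lemma mem_verts_iff_deg_ne_zero {P : Finset E} {v : V} : v ∈ G.verts ↑P ↔ G.deg ↑P v ≠ 0 := by
  simp [deg_coe_finset, Finset.sum_eq_zero_iff, endCount, verts, touches, or_iff_not_imp_left]

lemma negCount_coe_finset (P : Finset E) : (G.negCount ↑P : ZMod 2) = ∑ e ∈ P, G.negBit e := by
  have hfilter : {e ∈ (P : Set E) | G.sign e = false} = ↑(P.filter fun e => G.sign e = false) := by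
    ext; simp
  rw [negCount, hfilter, Set.ncard_coe_finset, Finset.natCast_card_filter]
  exact Finset.sum_congr rfl fun e _ => by rw [negBit]; cases G.sign e <;> simp

lemma sum_negBit_eq_of_isPotential [Fintype V] {P : Finset E} {s : V → ZMod 2}
    (hs : G.IsPotential ↑P s) : ∑ e ∈ P, G.negBit e = ∑ v, (G.deg ↑P v : ZMod 2) * s v := by
  calc ∑ e ∈ P, G.negBit e = ∑ e ∈ P, ∑ v, (G.endCount e v : ZMod 2) * s v :=
        Finset.sum_congr rfl fun e he => by
          simp [← hs e he, endCount, add_mul, Finset.sum_add_distrib]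
    _ = ∑ v, (G.deg ↑P v : ZMod 2) * s v := by
        rw [Finset.sum_comm]
        simp [deg_coe_finset, Finset.sum_mul]

lemma IsCycle.even_negCount [Fintype V] [Finite E] {C : Set E} (hC : G.IsCycle C)
    {s : V → ZMod 2} (hs : G.IsPotential C s) : Even (G.negCount C) := by
  obtain ⟨P, rfl⟩ := C.toFinite.exists_finset_coe
  rw [← ZMod.natCast_eq_zero_iff_even, negCount_coe_finset, sum_negBit_eq_of_isPotential hs]
  refine Finset.sum_eq_zero fun v _ => ?_
  by_cases hv : v ∈ G.verts ↑P
  · simp [hC.2.2 v hv, show (2 : ZMod 2) = 0 from rfl]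
  · simp [not_not.mp (mt mem_verts_iff_deg_ne_zero.2 hv)]

end Potential

section Path

lemma eqvGen_adjIn_mono {X Y : Set E} (hXY : X ⊆ Y) {a b : V}
    (h : Relation.EqvGen (G.adjIn X) a b) : Relation.EqvGen (G.adjIn Y) a b :=
  Relation.EqvGen.mono (fun _ _ ⟨e, he, hends⟩ => ⟨e, hXY he, hends⟩) _ _ h

lemma mem_comp_self (X : Set E) (v : V) : v ∈ G.comp X v := Relation.EqvGen.refl v

lemma comp_eq_comp_of_mem {X : Set E} {a b w : V} (ha : w ∈ G.comp X a) (hb : w ∈ G.comp X b) :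
    G.comp X a = G.comp X b := by
  ext u
  exact ⟨fun hu => .trans _ _ _ hb (.trans _ _ _ (.symm _ _ ha) hu),
    fun hu => .trans _ _ _ ha (.trans _ _ _ (.symm _ _ hb) hu)⟩

lemma ends_mem_comp_iff {X : Set E} {e : E} (he : e ∈ X) (a : V) :
    (G.ends e).1 ∈ G.comp X a ↔ (G.ends e).2 ∈ G.comp X a := by
  have hrel : Relation.EqvGen (G.adjIn X) (G.ends e).1 (G.ends e).2 := .rel _ _ ⟨e, he, .inl rfl⟩
  exact ⟨fun h => .trans _ _ _ h hrel, fun h => .trans _ _ _ h (.symm _ _ hrel)⟩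

variable (G) in
/-- `P` is the edge set of a path from `a` to `b` with vertex set `T`: the ends have degree one,
the inner vertices degree two (a path of length zero has `a = b` and `P = ∅`). -/
structure IsPathBetween (P : Finset E) (a b : V) (T : Set V) : Prop where
  eqvGen : ∀ w ∈ T, Relation.EqvGen (G.adjIn ↑P) a w
  deg_add : ∀ w, G.deg ↑P w + (if a = w then 1 else 0) + (if b = w then 1 else 0) =
    if w ∈ T then 2 else 0

namespace IsPathBetween

variable {P : Finset E} {a b : V} {T : Set V}

lemma verts_subset (hP : G.IsPathBetween P a b T) : G.verts ↑P ⊆ T := by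
  intro w hw
  have h := hP.deg_add w
  have h0 := mem_verts_iff_deg_ne_zero.1 hw
  split_ifs at h <;> omega

lemma nil (a : V) : G.IsPathBetween ∅ a a {a} where
  eqvGen w hw := by rw [Set.mem_singleton_iff.1 hw]; exact .refl a
  deg_add w := by
    rw [deg_coe_finset]
    by_cases h : a = w <;> simp [h, eq_comm]

lemma cons {c : V} {e : E} (hP : G.IsPathBetween P c b T)
    (he : G.ends e = (a, c) ∨ G.ends e = (c, a)) (ha : a ∉ T) :
    G.IsPathBetween (insert e P) a b (insert a T) := by
  have heP : e ∉ P := fun heP =>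
    ha (hP.verts_subset ⟨e, heP, by rcases he with he | he <;> simp [touches, he]⟩)
  have hac : Relation.EqvGen (G.adjIn ↑(insert e P)) a c :=
    .rel _ _ ⟨e, by simp, he⟩
  have hcount : ∀ w, G.endCount e w = (if a = w then 1 else 0) + (if c = w then 1 else 0) := by
    intro w
    rcases he with he | he <;> simp only [endCount, he, add_comm]
  refine ⟨?_, fun w => ?_⟩
  · rintro w (rfl | hw)
    · exact .refl w
    · exact .trans _ _ _ hac (eqvGen_adjIn_mono (by simp) (hP.eqvGen w hw))
  · have h := hP.deg_add w
    rw [deg_insert heP, hcount]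
    by_cases haw : a = w
    · subst haw
      simp only [if_neg ha, mem_insert_iff, true_or, if_true] at h ⊢
      omega
    · simp only [mem_insert_iff, Ne.symm haw, false_or, if_neg haw]
      split_ifs at h ⊢ <;> omega

lemma isCycle_insert (hP : G.IsPathBetween P a b T) {e₀ : E} (he₀ : e₀ ∉ P)
    (hends : G.ends e₀ = (a, b)) : G.IsCycle ↑(insert e₀ P) := by
  have hdeg : ∀ w, G.deg ↑(insert e₀ P) w = if w ∈ T then 2 else 0 := fun w => by
    rw [deg_insert he₀, ← hP.deg_add w]
    simp only [endCount, hends]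
    ring
  have hverts : G.verts ↑(insert e₀ P) = T := by
    ext w
    rw [mem_verts_iff_deg_ne_zero, hdeg]
    split_ifs <;> simp_all
  refine ⟨⟨e₀, by simp⟩, fun u hu w hw => ?_, fun w hw => ?_⟩
  · rw [hverts] at hu hw
    exact eqvGen_adjIn_mono (by simp) (.trans _ _ _ (.symm _ _ (hP.eqvGen u hu)) (hP.eqvGen w hw))
  · rw [hdeg, if_pos (hverts ▸ hw)]

lemma sum_negBit [Fintype V] (hP : G.IsPathBetween P a b T) {s : V → ZMod 2}
    (hs : G.IsPotential ↑P s) : ∑ e ∈ P, G.negBit e = s a + s b := by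
  have hdeg : ∀ w, (G.deg ↑P w : ZMod 2) = (if a = w then 1 else 0) + (if b = w then 1 else 0) := by
    intro w
    have h := congrArg (Nat.cast : ℕ → ZMod 2) (hP.deg_add w)
    push_cast at h
    rw [← CharTwo.add_eq_zero, ← add_assoc, h]
    split_ifs <;> rfl
  simp [sum_negBit_eq_of_isPotential hs, hdeg, add_mul, Finset.sum_add_distrib]

end IsPathBetween

lemma exists_isPathBetween_of_isPath {X : Set E} {a b : V}
    (p : (SimpleGraph.fromRel (G.adjIn X)).Walk a b) (hp : p.IsPath) :
    ∃ P : Finset E, ↑P ⊆ X ∧ G.IsPathBetween P a b {w | w ∈ p.support} := by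
  induction p with
  | nil => exact ⟨∅, by simp, by simpa using IsPathBetween.nil _⟩
  | @cons a c _ hadj p ih =>
    rw [SimpleGraph.Walk.cons_isPath_iff] at hp
    obtain ⟨P, hPX, hP⟩ := ih hp.1
    obtain ⟨-, hac⟩ := (SimpleGraph.fromRel_adj _ _ _).1 hadj
    obtain ⟨e, heX, he⟩ : ∃ e ∈ X, G.ends e = (a, c) ∨ G.ends e = (c, a) := by
      rcases hac with ⟨e, heX, he⟩ | ⟨e, heX, he⟩
      · exact ⟨e, heX, he⟩
      · exact ⟨e, heX, he.symm⟩
    refine ⟨insert e P, by simpa [Set.insert_subset_iff] using ⟨heX, hPX⟩, ?_⟩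
    simpa [Set.insert_def] using hP.cons he hp.2

lemma exists_isPathBetween {X : Set E} {a b : V} (h : Relation.EqvGen (G.adjIn X) a b) :
    ∃ P : Finset E, ↑P ⊆ X ∧ ∃ T, G.IsPathBetween P a b T := by
  obtain ⟨p⟩ := SimpleGraph.reachable_fromRel_of_eqvGen h
  obtain ⟨P, hPX, hP⟩ := exists_isPathBetween_of_isPath p.toPath.1 p.toPath.2
  exact ⟨P, hPX, _, hP⟩

end Path

lemma IsPotential.add_indicator_comp {X : Set E} {s : V → ZMod 2} (hs : G.IsPotential X s)
    (a : V) : G.IsPotential X (s + (G.comp X a).indicator 1) := by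
  intro e he
  have hflip : (G.comp X a).indicator (1 : V → ZMod 2) (G.ends e).1 =
      (G.comp X a).indicator 1 (G.ends e).2 := by
    by_cases h : (G.ends e).1 ∈ G.comp X a
    · rw [indicator_of_mem h, indicator_of_mem ((ends_mem_comp_iff he a).1 h)]
      rfl
    · rw [indicator_of_notMem h, indicator_of_notMem (mt (ends_mem_comp_iff he a).2 h)]
  rw [Pi.add_apply, Pi.add_apply, hflip, add_add_add_comm, CharTwo.add_self_eq_zero, add_zero,
    hs e he]

/-- Harary: add one edge `e₀` at a time; if no switching function of the smaller set works for
`e₀`, either switching a component repairs `e₀`, or a path joining its ends closes an unbalanced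
cycle. -/
lemma exists_isPotential [Fintype V] [Finite E] {X : Set E}
    (hX : ∀ C ⊆ X, G.IsCycle C → Even (G.negCount C)) : ∃ s, G.IsPotential X s := by
  induction X, X.toFinite using Set.Finite.induction_on with
  | empty => exact ⟨0, by simp [IsPotential]⟩
  | @insert e₀ X he₀ _ ih =>
    obtain ⟨s, hs⟩ := ih fun C hC => hX C (hC.trans (subset_insert _ _))
    set u := (G.ends e₀).1
    set v := (G.ends e₀).2
    by_cases hc : s u + s v = G.negBit e₀
    · exact ⟨s, fun e he => he.elim (fun h => h ▸ hc) (hs e)⟩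
    by_cases huv : Relation.EqvGen (G.adjIn X) u v
    · exfalso
      obtain ⟨P, hPX, T, hP⟩ := exists_isPathBetween huv
      have he₀P : e₀ ∉ P := fun h => he₀ (hPX h)
      have hC := hX _ (by simpa using insert_subset_insert hPX) (hP.isCycle_insert he₀P rfl)
      rw [← ZMod.natCast_eq_zero_iff_even, negCount_coe_finset, Finset.sum_insert he₀P,
        hP.sum_negBit (hs.mono hPX)] at hC
      exact hc (CharTwo.add_eq_zero.1 hC).symm
    · refine ⟨s + (G.comp X u).indicator 1, forall_mem_insert.2 ⟨?_, hs.add_indicator_comp u⟩⟩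
      have hv : v ∉ G.comp X u := huv
      have hflip : ∀ x y : ZMod 2, x ≠ y → x + 1 = y := by decide
      rw [Pi.add_apply, Pi.add_apply, indicator_of_mem (mem_comp_self X u), indicator_of_notMem hv,
        add_zero, Pi.one_apply, add_right_comm]
      exact hflip _ _ hc

lemma balancedComponent_comp_iff [Fintype V] [Finite E] (b : V) :
    G.BalancedComponent univ (G.comp univ b) ↔
      ∃ s, G.IsPotential {e | (G.ends e).1 ∈ G.comp univ b} s := by
  constructor
  · rintro ⟨-, hbal⟩
    refine exists_isPotential fun C hC hcyc => hbal C (subset_univ C) ?_ hcyc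
    rintro w ⟨e, he, hw | hw⟩ <;> rw [← hw]
    · exact hC he
    · exact (ends_mem_comp_iff (mem_univ e) b).1 (hC he)
  · rintro ⟨s, hs⟩
    exact ⟨⟨b, rfl⟩, fun C _ hCb hC => hC.even_negCount (hs.mono fun e he => hCb ⟨e, he, .inl rfl⟩)⟩

section NullSpace

open scoped Matrix

variable [Fintype V] {K : Type*} [Field K]

variable (G K) in
noncomputable def leftNullSpace : Submodule K (V → K) := LinearMap.ker (G.incMatrix K)ᵀ.mulVecLin

lemma mem_leftNullSpace {x : V → K} : x ∈ G.leftNullSpace K ↔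
    ∀ e, x (G.ends e).1 + (if G.sign e then -1 else 1) * x (G.ends e).2 = 0 := by
  simp [leftNullSpace, funext_iff, Matrix.vecMul, dotProduct, incMatrix, incCol, mul_add,
    Finset.sum_add_distrib, mul_ite]

lemma sq_eq_sq_of_eqvGen {x : V → K} (hx : x ∈ G.leftNullSpace K) {Y : Set E} {a b : V}
    (h : Relation.EqvGen (G.adjIn Y) a b) : x a ^ 2 = x b ^ 2 := by
  have hedge : ∀ e, x (G.ends e).1 ^ 2 = x (G.ends e).2 ^ 2 := fun e => by
    rw [eq_neg_of_add_eq_zero_left (mem_leftNullSpace.1 hx e)]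
    split_ifs <;> ring
  induction h with
  | rel u w huw =>
    obtain ⟨e, -, he | he⟩ := huw
    · simpa [he] using hedge e
    · simpa [he] using (hedge e).symm
  | refl => rfl
  | symm _ _ _ ih => exact ih.symm
  | trans _ _ _ _ _ ih₁ ih₂ => exact ih₁.trans ih₂

lemma eq_zero_iff_of_eqvGen {x : V → K} (hx : x ∈ G.leftNullSpace K) {Y : Set E} {a b : V}
    (h : Relation.EqvGen (G.adjIn Y) a b) : x a = 0 ↔ x b = 0 := by
  rw [← pow_eq_zero_iff two_ne_zero, sq_eq_sq_of_eqvGen hx h, pow_eq_zero_iff two_ne_zero]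

lemma indicator_comp_mem_leftNullSpace {b : V} {y : V → K}
    (hy : ∀ e, (G.ends e).1 ∈ G.comp univ b →
      y (G.ends e).1 + (if G.sign e then -1 else 1) * y (G.ends e).2 = 0) :
    (G.comp univ b).indicator y ∈ G.leftNullSpace K := by
  refine mem_leftNullSpace.2 fun e => ?_
  by_cases h : (G.ends e).1 ∈ G.comp univ b
  · rw [indicator_of_mem h, indicator_of_mem ((ends_mem_comp_iff (mem_univ e) b).1 h), hy e h]
  · rw [indicator_of_notMem h, indicator_of_notMem (mt (ends_mem_comp_iff (mem_univ e) b).2 h),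
      mul_zero, add_zero]

variable (G K) in
def nullComponents : Set (Set V) :=
  {S | ∃ b, S = G.comp univ b ∧ ∃ x ∈ G.leftNullSpace K, x b ≠ 0}

lemma exists_normalized_of_mem_nullComponents {S : Set V} (hS : S ∈ G.nullComponents K) :
    ∃ p ∈ S, ∃ y ∈ G.leftNullSpace K, y p = 1 ∧ ∀ w ∉ S, y w = 0 := by
  obtain ⟨b, rfl, x, hx, hxb⟩ := hS
  refine ⟨b, mem_comp_self univ b, (x b)⁻¹ • (G.comp univ b).indicator x,
    Submodule.smul_mem _ _ (indicator_comp_mem_leftNullSpace fun e _ => mem_leftNullSpace.1 hx e),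
    ?_, fun w hw => ?_⟩
  · simp [indicator_of_mem (mem_comp_self univ b), hxb]
  · simp [indicator_of_notMem hw]

lemma eq_of_mem_nullComponents {S S' : Set V} (hS : S ∈ G.nullComponents K)
    (hS' : S' ∈ G.nullComponents K) {w : V} (hw : w ∈ S) (hw' : w ∈ S') : S = S' := by
  obtain ⟨b, rfl, -⟩ := hS
  obtain ⟨b', rfl, -⟩ := hS'
  exact comp_eq_comp_of_mem hw hw'

lemma finrank_leftNullSpace :
    Module.finrank K (G.leftNullSpace K) = (G.nullComponents K).ncard := by
  choose p hpS y hyN hyp hy0 using fun S : G.nullComponents K =>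
    exists_normalized_of_mem_nullComponents S.2
  let φ : G.leftNullSpace K →ₗ[K] (G.nullComponents K → K) :=
    { toFun x S := x.1 (p S)
      map_add' _ _ := rfl
      map_smul' _ _ := rfl }
  have hinj : Function.Injective φ := by
    refine (injective_iff_map_eq_zero φ).2 fun x hx => Subtype.ext (funext fun w => ?_)
    by_contra hw
    let S : G.nullComponents K := ⟨G.comp univ w, w, rfl, x.1, x.2, hw⟩
    exact hw ((eq_zero_iff_of_eqvGen x.2 (hpS S)).2 (congrFun hx S))
  have hsurj : Function.Surjective φ := by
    intro c
    refine ⟨⟨∑ S, c S • y S, Submodule.sum_mem _ fun S _ => Submodule.smul_mem _ _ (hyN S)⟩,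
      funext fun S' => ?_⟩
    change (∑ S, c S • y S) (p S') = c S'
    rw [Finset.sum_apply, Finset.sum_eq_single S' (fun S _ hS => ?_) (by simp)]
    · simp [hyp]
    · rw [Pi.smul_apply, hy0 S _ fun h => hS (Subtype.ext ?_), smul_zero]
      exact eq_of_mem_nullComponents S.2 S'.2 h (hpS S')
  rw [(LinearEquiv.ofBijective φ ⟨hinj, hsurj⟩).finrank_eq, Module.finrank_fintype_fun_eq_card,
    Fintype.card_eq_nat_card, Nat.card_coe_set_eq]

lemma rank_incMatrix [Fintype E] :
    (G.incMatrix K).rank = Fintype.card V - (G.nullComponents K).ncard := by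
  have h := (G.incMatrix K)ᵀ.mulVecLin.finrank_range_add_finrank_ker
  rw [Module.finrank_fintype_fun_eq_card] at h
  rw [← Matrix.rank_transpose, ← finrank_leftNullSpace, ← h, Matrix.rank, leftNullSpace,
    Nat.add_sub_cancel]

lemma exists_isPotential_of_mem_leftNullSpace (hK : ringChar K ≠ 2) {x : V → K}
    (hx : x ∈ G.leftNullSpace K) {b : V} (hxb : x b ≠ 0) :
    ∃ s, G.IsPotential {e | (G.ends e).1 ∈ G.comp univ b} s := by
  have hpm : ∀ w ∈ G.comp univ b, x w = x b ∨ x w = -x b := fun w hw =>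
    sq_eq_sq_iff_eq_or_eq_neg.1 (sq_eq_sq_of_eqvGen hx hw).symm
  have hne : -x b ≠ x b := mt (Ring.eq_self_iff_eq_zero_of_char_ne_two hK).1 hxb
  have hne' : x b + x b ≠ 0 := mt neg_eq_iff_add_eq_zero.2 hne
  have hne'' : -x b + -x b ≠ 0 := by rwa [← neg_add, neg_ne_zero]
  have h11 : (1 : ZMod 2) + 1 = 0 := rfl
  refine ⟨fun w => if x w = x b then 0 else 1, fun e he => ?_⟩
  have hedge := mem_leftNullSpace.1 hx e
  rcases hpm _ he with hu | hu <;>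
    rcases hpm _ ((ends_mem_comp_iff (mem_univ e) b).1 he) with hv | hv <;>
    cases hsgn : G.sign e <;> simp_all [negBit]

lemma exists_mem_leftNullSpace_of_isPotential {b : V} {s : V → ZMod 2}
    (hs : G.IsPotential {e | (G.ends e).1 ∈ G.comp univ b} s) :
    ∃ x ∈ G.leftNullSpace K, x b ≠ 0 := by
  refine ⟨(G.comp univ b).indicator fun w => if s w = 0 then 1 else -1,
    indicator_comp_mem_leftNullSpace fun e he => ?_, ?_⟩
  · have h := hs e he
    have hcases : ∀ t : ZMod 2, t = 0 ∨ t = 1 := by decide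
    rcases hcases (s (G.ends e).1) with hu | hu <;> rcases hcases (s (G.ends e).2) with hv | hv <;>
      cases hsgn : G.sign e <;> simp_all [negBit]
  · rw [indicator_of_mem (mem_comp_self univ b)]
    split_ifs <;> simp

lemma exists_mem_leftNullSpace_of_ringChar_eq_two (hK : ringChar K = 2) (b : V) :
    ∃ x ∈ G.leftNullSpace K, x b ≠ 0 := by
  have hneg : (-1 : K) = 1 := neg_one_eq_one_iff.2 hK
  refine ⟨(G.comp univ b).indicator 1, indicator_comp_mem_leftNullSpace fun e _ => ?_, ?_⟩
  · simpa [hneg] using neg_eq_iff_add_eq_zero.1 hneg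
  · simp [indicator_of_mem (mem_comp_self univ b)]

lemma nullComponents_eq_of_ringChar_ne_two [Finite E] (hK : ringChar K ≠ 2) :
    G.nullComponents K = {S | G.BalancedComponent univ S} := by
  ext S
  constructor
  · rintro ⟨b, rfl, x, hx, hxb⟩
    exact (balancedComponent_comp_iff b).2 (exists_isPotential_of_mem_leftNullSpace hK hx hxb)
  · intro hS
    obtain ⟨b, rfl⟩ := hS.1
    obtain ⟨s, hs⟩ := (balancedComponent_comp_iff b).1 hS
    exact ⟨b, rfl, exists_mem_leftNullSpace_of_isPotential hs⟩

lemma nullComponents_eq_of_ringChar_eq_two_or_balanced [Finite E]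
    (h : ringChar K = 2 ∨ G.Balanced) : G.nullComponents K = {S | ∃ v, S = G.comp univ v} := by
  ext S
  refine ⟨fun ⟨b, hb, _⟩ => ⟨b, hb⟩, ?_⟩
  rintro ⟨b, rfl⟩
  refine ⟨b, rfl, ?_⟩
  rcases h with hK | hbal
  · exact exists_mem_leftNullSpace_of_ringChar_eq_two hK b
  · obtain ⟨s, hs⟩ := exists_isPotential fun C _ hC => hbal C hC
    exact exists_mem_leftNullSpace_of_isPotential (hs.mono (subset_univ _))

end NullSpace

end SignedGraph

theorem stmt9_general {V E : Type*} [Fintype V] [Fintype E] (G : SignedGraph V E)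
    (K : Type*) [Field K] :
    (ringChar K ≠ 2 →
      (G.incMatrix K).rank = Fintype.card V - G.numBalancedComponents Set.univ) ∧
    (ringChar K = 2 ∨ G.Balanced →
      (G.incMatrix K).rank = Fintype.card V - G.numComponents Set.univ) := by
  refine ⟨fun hK => ?_, fun h => ?_⟩
  · rw [G.rank_incMatrix, SignedGraph.nullComponents_eq_of_ringChar_ne_two hK]
    rfl
  · rw [G.rank_incMatrix, SignedGraph.nullComponents_eq_of_ringChar_eq_two_or_balanced h]
    rfl

theorem stmt9 {V E : Type*} [Fintype V] [Fintype E] [DecidableEq V] (G : SignedGraph V E)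
    (K : Type*) [Field K] :
    (ringChar K ≠ 2 →
      (G.incMatrix K).rank = Fintype.card V - G.numBalancedComponents Set.univ) ∧
    (ringChar K = 2 ∨ G.Balanced →
      (G.incMatrix K).rank = Fintype.card V - G.numComponents Set.univ) :=
  stmt9_general G K
end

section
/- Harary's balance theorem: a signed simple graph G_σ is balanced if and only if its vertex set can be partitioned into two (possibly empty) classes V₁, V₂ such that an edge is negative if and only if its endpoints lie in distinct classes. -/
open Classical Set

/-!
If the negative edges are exactly those whose ends get different colours `W`, then modulo 2 the
number of negative edges of a cycle `C` is `∑_{e ∈ C} (W e₁ + W e₂) = ∑_v deg_C(v) W(v)`, which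
vanishes because every degree in a cycle is even.

Conversely, in a balanced graph every closed walk has an even number of negative edges: a shortest
closed walk with an odd number of them is a cycle, since a repeated vertex would split it into two
shorter closed walks, one of them odd. Hence the parity of the number of negative edges of a walk
depends only on its endpoints, and colouring each vertex by that parity, measured from a fixed base
point of its component, does the job.
-/

namespace SignedGraph

variable {V E : Type*} (G : SignedGraph V E)

noncomputable def incidence (e : E) (v : V) : ℕ :=
  (if (G.ends e).1 = v then 1 else 0) + (if (G.ends e).2 = v then 1 else 0)

-- A walk is encoded by its start vertex and its list of edges; `G.other e u` is the far end of
-- `e` seen from `u` (junk if `e` does not touch `u`).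
noncomputable def other (e : E) (u : V) : V :=
  if (G.ends e).1 = u then (G.ends e).2 else (G.ends e).1

def IsWalk : V → List E → Prop
  | _, [] => True
  | u, e :: es => G.touches e u ∧ IsWalk (G.other e u) es

noncomputable def walkEnd : V → List E → V
  | u, [] => u
  | u, e :: es => walkEnd (G.other e u) es

noncomputable def support : V → List E → List V
  | u, [] => [u]
  | u, e :: es => u :: support (G.other e u) es

def walkNegCount (es : List E) : ℕ := es.countP fun e => !G.sign e

def Reach (u v : V) : Prop := ∃ es, G.IsWalk u es ∧ G.walkEnd u es = v

variable {G} {e : E} {u v w : V} {es fs : List E}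

lemma ends_eq_or (h : G.touches e u) :
    G.ends e = (u, G.other e u) ∨ G.ends e = (G.other e u, u) := by
  unfold other
  by_cases h1 : (G.ends e).1 = u
  · simp [h1, Prod.ext_iff]
  · simp [h1, h.resolve_left h1, Prod.ext_iff]

lemma touches_iff (h : G.touches e u) : G.touches e w ↔ w = u ∨ w = G.other e u := by
  rcases ends_eq_or h with h' | h' <;> unfold touches <;> rw [h'] <;> simp only [eq_comm, or_comm]

lemma touches_other (h : G.touches e u) : G.touches e (G.other e u) :=
  (touches_iff h).2 (Or.inr rfl)

lemma other_other (h : G.touches e u) : G.other e (G.other e u) = u := by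
  have hne := ends_eq_or h
  generalize G.other e u = x at hne ⊢
  unfold other
  rcases hne with h' | h' <;> rw [h'] <;> split_ifs <;> simp_all

lemma incidence_eq (h : G.touches e u) :
    G.incidence e w = (if u = w then 1 else 0) + (if G.other e u = w then 1 else 0) := by
  rcases ends_eq_or h with h' | h' <;> simp only [incidence, h', add_comm]

lemma isWalk_append : G.IsWalk u (es ++ fs) ↔ G.IsWalk u es ∧ G.IsWalk (G.walkEnd u es) fs := by
  induction es generalizing u with
  | nil => simp [IsWalk, walkEnd]
  | cons e es ih => simp [IsWalk, walkEnd, ih, and_assoc]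

lemma walkEnd_append : G.walkEnd u (es ++ fs) = G.walkEnd (G.walkEnd u es) fs := by
  induction es generalizing u with
  | nil => rfl
  | cons e es ih => exact ih

lemma walkNegCount_append : G.walkNegCount (es ++ fs) = G.walkNegCount es + G.walkNegCount fs :=
  List.countP_append

lemma walkNegCount_reverse : G.walkNegCount es.reverse = G.walkNegCount es := List.countP_reverse

lemma walkNegCount_singleton : G.walkNegCount [e] = if G.sign e then 0 else 1 := by
  cases hs : G.sign e <;> simp [walkNegCount, hs]

lemma IsWalk.reverse (h : G.IsWalk u es) :
    G.IsWalk (G.walkEnd u es) es.reverse ∧ G.walkEnd (G.walkEnd u es) es.reverse = u := by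
  induction es generalizing u with
  | nil => exact ⟨trivial, rfl⟩
  | cons e es ih =>
    obtain ⟨hW, hend⟩ := ih h.2
    simp only [walkEnd, List.reverse_cons, isWalk_append, walkEnd_append, hend]
    exact ⟨⟨hW, touches_other h.1, trivial⟩, other_other h.1⟩

lemma reach_equivalence : Equivalence G.Reach where
  refl _ := ⟨[], trivial, rfl⟩
  symm := by
    rintro u v ⟨es, hW, rfl⟩
    exact ⟨es.reverse, hW.reverse⟩
  trans := by
    rintro u v w ⟨es, hW, rfl⟩ ⟨fs, hW', rfl⟩
    exact ⟨es ++ fs, isWalk_append.2 ⟨hW, hW'⟩, walkEnd_append⟩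

lemma support_ne_nil : G.support u es ≠ [] := by
  cases es <;> simp [support]

lemma length_support : (G.support u es).length = es.length + 1 := by
  induction es generalizing u with
  | nil => rfl
  | cons e es ih => simp [support, ih]

lemma getElem_support (k : ℕ) (hk : k < (G.support u es).length) :
    (G.support u es)[k] = G.walkEnd u (es.take k) := by
  induction es generalizing u k with
  | nil => simp only [support, List.length_singleton, Nat.lt_one_iff] at hk; subst hk; rfl
  | cons e es ih =>
    cases k with
    | zero => rfl
    | succ k => exact ih k _

lemma dropLast_support_append : (G.support u es).dropLast ++ [G.walkEnd u es] = G.support u es := by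
  induction es generalizing u with
  | nil => rfl
  | cons e es ih =>
    rw [support, List.dropLast_cons_of_ne_nil support_ne_nil, List.cons_append]
    exact congrArg (u :: ·) ih

lemma tail_support_perm_dropLast (hcl : G.walkEnd u es = u) :
    (G.support u es).tail.Perm (G.support u es).dropLast := by
  cases es with
  | nil => rfl
  | cons e es =>
    have hcl' : G.walkEnd (G.other e u) es = u := hcl
    rw [support, List.tail_cons, List.dropLast_cons_of_ne_nil support_ne_nil]
    conv_lhs => rw [← dropLast_support_append, hcl']
    exact List.perm_append_singleton _ _

lemma IsWalk.sum_incidence (h : G.IsWalk u es) :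
    (es.map (G.incidence · w)).sum =
      (G.support u es).dropLast.count w + (G.support u es).tail.count w := by
  induction es generalizing u with
  | nil => rfl
  | cons e es ih =>
    have hs : (G.support (G.other e u) es).count w =
        (G.support (G.other e u) es).tail.count w + if G.other e u = w then 1 else 0 := by
      cases es <;> simp [support, List.count_cons]
    rw [List.map_cons, List.sum_cons, ih h.2, incidence_eq h.1, support,
      List.dropLast_cons_of_ne_nil support_ne_nil, List.tail_cons, List.count_cons, hs]
    simp only [beq_iff_eq]
    omega

lemma IsWalk.mem_verts_iff (h : G.IsWalk u es) (hne : es ≠ []) :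
    w ∈ G.verts {e | e ∈ es} ↔ w ∈ G.support u es := by
  induction es generalizing u with
  | nil => exact absurd rfl hne
  | cons e es ih =>
    have hverts : w ∈ G.verts {f | f ∈ e :: es} ↔
        G.touches e w ∨ w ∈ G.verts {f | f ∈ es} := by
      simp [verts]
    rw [hverts, touches_iff h.1, support, List.mem_cons]
    rcases eq_or_ne es [] with rfl | hes
    · simp [verts, support]
    · rw [ih h.2 hes]
      have : G.other e u ∈ G.support (G.other e u) es := by cases es <;> simp [support]
      constructor
      · rintro ((rfl | rfl) | hw) <;> simp_all
      · tauto

lemma IsWalk.eqvGen_adjIn {C : Set E} (h : G.IsWalk u es) (hC : ∀ e ∈ es, e ∈ C)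
    (hw : w ∈ G.support u es) : Relation.EqvGen (G.adjIn C) u w := by
  induction es generalizing u with
  | nil =>
    obtain rfl := List.mem_singleton.1 hw
    exact .refl _
  | cons e es ih =>
    rcases List.mem_cons.1 hw with rfl | hw
    · exact .refl _
    · have hadj : G.adjIn C u (G.other e u) := ⟨e, hC e List.mem_cons_self, ends_eq_or h.1⟩
      exact .trans _ _ _ (.rel _ _ hadj) (ih h.2 (fun f hf => hC f (List.mem_cons_of_mem _ hf)) hw)

lemma deg_eq_finsum_incidence (X : Set E) : G.deg X v = ∑ᶠ e ∈ X, G.incidence e v := rfl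

lemma deg_setOf_mem (hes : es.Nodup) :
    G.deg {e | e ∈ es} w = (es.map (G.incidence · w)).sum := by
  have hset : {e | e ∈ es} = (es.toFinset : Set E) := by ext; simp
  rw [deg_eq_finsum_incidence, hset, finsum_mem_coe_finset, List.sum_toFinset _ hes]

lemma negCount_setOf_mem (hes : es.Nodup) : G.negCount {e | e ∈ es} = G.walkNegCount es := by
  have hset : {e ∈ {e | e ∈ es} | G.sign e = false} =
      ((es.filter fun e => !G.sign e).toFinset : Set E) := by
    ext; simp
  rw [negCount, hset, Set.ncard_coe_finset, List.toFinset_card_of_nodup (hes.filter _),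
    ← List.countP_eq_length_filter, walkNegCount]

theorem IsWalk.isCycle_setOf_mem (h : G.IsWalk u es) (hcl : G.walkEnd u es = u) (hne : es ≠ [])
    (hes : es.Nodup) (hsupp : (G.support u es).dropLast.Nodup) : G.IsCycle {e | e ∈ es} := by
  obtain ⟨e, es', rfl⟩ := List.exists_cons_of_ne_nil hne
  have hmem : ∀ w ∈ G.support u (e :: es'), w ∈ (G.support u (e :: es')).dropLast := by
    intro w hw
    rw [← dropLast_support_append, hcl, List.mem_append, List.mem_singleton] at hw
    rcases hw with hw | rfl
    · exact hw
    · rw [support, List.dropLast_cons_of_ne_nil support_ne_nil]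
      exact List.mem_cons_self
  refine ⟨⟨e, List.mem_cons_self⟩, fun a ha b hb => ?_, fun w hw => ?_⟩
  · have hreach := fun x (hx : x ∈ G.verts {f | f ∈ e :: es'}) =>
      h.eqvGen_adjIn (fun _ hf => hf) ((h.mem_verts_iff hne).1 hx)
    exact .trans _ _ _ (.symm _ _ (hreach a ha)) (hreach b hb)
  · have hw' := hmem w ((h.mem_verts_iff hne).1 hw)
    rw [deg_setOf_mem hes, h.sum_incidence, (tail_support_perm_dropLast hcl).count_eq,
      List.count_eq_one_of_mem hsupp hw']

lemma IsWalk.ends_getElem (h : G.IsWalk u es) (k : ℕ) (hk : k < es.length) :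
    G.ends es[k] = (G.walkEnd u (es.take k), G.walkEnd u (es.take (k + 1))) ∨
      G.ends es[k] = (G.walkEnd u (es.take (k + 1)), G.walkEnd u (es.take k)) := by
  induction es generalizing u k with
  | nil => exact absurd hk (Nat.not_lt_zero k)
  | cons e es ih =>
    cases k with
    | zero => simpa [walkEnd] using ends_eq_or h.1
    | succ k => simpa [walkEnd] using ih h.2 k (by simpa using hk)

lemma IsWalk.even_walkNegCount_of_not_nodup (h : G.IsWalk u es) (hcl : G.walkEnd u es = u)
    (hsupp : (G.support u es).dropLast.Nodup) (hes : ¬ es.Nodup) : Even (G.walkNegCount es) := by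
  set vtx : ℕ → V := fun k => G.walkEnd u (es.take k) with hvtx
  have hinj : ∀ a b, a < es.length → b < es.length → vtx a = vtx b → a = b := by
    intro a b ha hb hab
    have hlen : (G.support u es).dropLast.length = es.length := by simp [length_support]
    refine (hsupp.getElem_inj_iff (hi := hlen ▸ ha) (hj := hlen ▸ hb)).1 ?_
    simpa only [List.getElem_dropLast, getElem_support] using hab
  have hwrap : vtx es.length = vtx 0 := by simpa [hvtx, walkEnd] using hcl
  rw [List.Nodup, List.pairwise_iff_getElem] at hes
  push Not at hes
  obtain ⟨i, j, hi, hj, hij, heq⟩ := hes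
  -- an edge traversed twice in opposite directions forces an immediate backtrack `e, e`
  have hback (h1 : vtx j = vtx (i + 1)) (h2 : vtx (j + 1) = vtx i) : es.length = 2 := by
    obtain rfl : j = i + 1 := hinj j (i + 1) hj (by omega) h1
    by_cases hlt : i + 2 < es.length
    · exact absurd (hinj (i + 2) i hlt (by omega) h2) (by omega)
    · rw [show i + 1 + 1 = es.length by omega, hwrap] at h2
      have := hinj 0 i (by omega) (by omega) h2
      omega
  have hlen : es.length = 2 := by
    rcases h.ends_getElem i hi with hi' | hi' <;> rcases h.ends_getElem j hj with hj' | hj' <;>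
      rw [heq, hj', Prod.mk.injEq] at hi'
    · exact absurd (hinj i j hi hj hi'.1.symm) (by omega)
    · exact hback hi'.2 hi'.1
    · exact hback hi'.1 hi'.2
    · exact absurd (hinj i j hi hj hi'.2.symm) (by omega)
  obtain ⟨a, b, rfl⟩ := List.length_eq_two.1 hlen
  obtain rfl : i = 0 := by simp at hj; omega
  obtain rfl : j = 1 := by simp at hj; omega
  obtain rfl : a = b := heq
  cases hs : G.sign a <;> simp [walkNegCount, hs]

lemma exists_append_of_mem_dropLast_support (hw : w ∈ (G.support u es).dropLast) :
    ∃ p q, es = p ++ q ∧ q ≠ [] ∧ G.walkEnd u p = w := by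
  induction es generalizing u with
  | nil => simp [support] at hw
  | cons e es ih =>
    rw [support, List.dropLast_cons_of_ne_nil support_ne_nil, List.mem_cons] at hw
    rcases hw with rfl | hw
    · exact ⟨[], e :: es, rfl, List.cons_ne_nil _ _, rfl⟩
    · obtain ⟨p, q, rfl, hq, rfl⟩ := ih hw
      exact ⟨e :: p, q, rfl, hq, rfl⟩

lemma exists_closed_infix_of_not_nodup (h : ¬ (G.support u es).dropLast.Nodup) :
    ∃ a b c, es = a ++ b ++ c ∧ b ≠ [] ∧ c ≠ [] ∧ G.walkEnd u (a ++ b) = G.walkEnd u a := by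
  induction es generalizing u with
  | nil => simp [support] at h
  | cons e es ih =>
    rw [support, List.dropLast_cons_of_ne_nil support_ne_nil, List.nodup_cons, not_and_or,
      not_not] at h
    rcases h with hu | h
    · obtain ⟨p, q, rfl, hq, hp⟩ := exists_append_of_mem_dropLast_support hu
      exact ⟨[], e :: p, q, rfl, List.cons_ne_nil _ _, hq, hp⟩
    · obtain ⟨a, b, c, rfl, hb, hc, hab⟩ := ih h
      exact ⟨e :: a, b, c, rfl, hb, hc, hab⟩

theorem IsWalk.exists_isCycle_not_even (h : G.IsWalk u es) (hcl : G.walkEnd u es = u)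
    (hodd : ¬ Even (G.walkNegCount es)) : ∃ C, G.IsCycle C ∧ ¬ Even (G.negCount C) := by
  induction hlen : es.length using Nat.strong_induction_on generalizing u es with
  | _ n ih =>
    by_cases hsupp : (G.support u es).dropLast.Nodup
    · have hes : es.Nodup := by_contra (hodd ∘ h.even_walkNegCount_of_not_nodup hcl hsupp)
      have hne : es ≠ [] := by rintro rfl; exact hodd (by simp [walkNegCount])
      exact ⟨_, h.isCycle_setOf_mem hcl hne hes hsupp, by rwa [negCount_setOf_mem hes]⟩
    · obtain ⟨a, b, c, rfl, hb, hc, hab⟩ := exists_closed_infix_of_not_nodup hsupp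
      obtain ⟨hab', hc'⟩ := isWalk_append.1 h
      obtain ⟨ha', hb'⟩ := isWalk_append.1 hab'
      rw [hab] at hc'
      have hbcl : G.walkEnd (G.walkEnd u a) b = G.walkEnd u a := walkEnd_append.symm.trans hab
      have hacl : G.walkEnd u (a ++ c) = u := by
        rw [walkEnd_append, ← hab, ← walkEnd_append, hcl]
      rw [walkNegCount_append, walkNegCount_append] at hodd
      simp only [List.length_append] at hlen
      by_cases hbe : Even (G.walkNegCount b)
      · refine ih (a ++ c).length ?_ (isWalk_append.2 ⟨ha', hc'⟩) hacl ?_ rfl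
        · have := List.length_pos_iff.2 hb
          simp only [List.length_append]; omega
        · rw [walkNegCount_append]
          exact fun hac => hodd (by rw [add_right_comm]; exact hac.add hbe)
      · refine ih b.length ?_ hb' hbcl hbe rfl
        have := List.length_pos_iff.2 hc
        omega

theorem Balanced.even_walkNegCount (hbal : G.Balanced) (h : G.IsWalk u es)
    (hcl : G.walkEnd u es = u) : Even (G.walkNegCount es) := by
  by_contra hodd
  obtain ⟨C, hC, hC'⟩ := h.exists_isCycle_not_even hcl hodd
  exact hC' (hbal C hC)

lemma Balanced.even_walkNegCount_iff (hbal : G.Balanced) (hes : G.IsWalk u es)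
    (hfs : G.IsWalk u fs) (hend : G.walkEnd u es = G.walkEnd u fs) :
    Even (G.walkNegCount es) ↔ Even (G.walkNegCount fs) := by
  obtain ⟨hrev, hrev_end⟩ := hfs.reverse
  rw [← hend] at hrev hrev_end
  have := hbal.even_walkNegCount (isWalk_append.2 ⟨hes, hrev⟩) (by rw [walkEnd_append, hrev_end])
  rwa [walkNegCount_append, walkNegCount_reverse, Nat.even_add] at this

theorem Balanced.exists_coloring (hbal : G.Balanced) :
    ∃ W : V → Bool, ∀ e, (G.sign e = false ↔ W (G.ends e).1 ≠ W (G.ends e).2) := by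
  let s : Setoid V := ⟨G.Reach, reach_equivalence⟩
  -- colour `v` by the parity of a walk to `v` from the chosen representative of its class
  choose p hp hend using fun v => Quotient.mk_out (s := s) v
  refine ⟨fun v => !decide (Even (G.walkNegCount (p v))), fun e => ?_⟩
  have hedge : G.IsWalk (G.ends e).1 [e] ∧ G.walkEnd (G.ends e).1 [e] = (G.ends e).2 :=
    ⟨⟨Or.inl rfl, trivial⟩, if_pos rfl⟩
  have hrep : (Quotient.mk s (G.ends e).1).out = (Quotient.mk s (G.ends e).2).out :=
    congrArg _ (Quotient.sound ⟨[e], hedge⟩)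
  have hW := isWalk_append.2 ⟨hp (G.ends e).1, (hend (G.ends e).1).symm ▸ hedge.1⟩
  have hWend : G.walkEnd (Quotient.mk s (G.ends e).1).out (p (G.ends e).1 ++ [e]) =
      (G.ends e).2 := by
    rw [walkEnd_append, hend, hedge.2]
  have hpb := hp (G.ends e).2
  have hpb_end := hend (G.ends e).2
  rw [← hrep] at hpb hpb_end
  have key := hbal.even_walkNegCount_iff hW hpb (hWend.trans hpb_end.symm)
  rw [walkNegCount_append, walkNegCount_singleton] at key
  rw [ne_eq, Bool.not_inj_iff, decide_eq_decide]
  cases hs : G.sign e <;>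
    simp only [hs, Bool.false_eq_true, if_false, if_true, add_zero, Nat.even_add_one] at key <;>
    simp <;> tauto

section Coloring

variable [Fintype V]

lemma sum_incidence_smul {M : Type*} [AddCommMonoid M] (e : E) (f : V → M) :
    ∑ v, G.incidence e v • f v = f (G.ends e).1 + f (G.ends e).2 := by
  simp [incidence, add_smul, Finset.sum_add_distrib]

lemma finsum_mem_add_ends {M : Type*} [AddCommMonoid M] {C : Set E} (hC : C.Finite) (f : V → M) :
    ∑ᶠ e ∈ C, (f (G.ends e).1 + f (G.ends e).2) = ∑ v, G.deg C v • f v := by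
  simp_rw [deg_eq_finsum_incidence, finsum_mem_eq_finite_toFinset_sum _ hC, Finset.sum_smul,
    ← sum_incidence_smul]
  exact Finset.sum_comm

theorem even_negCount_of_coloring {C : Set E} (W : V → Bool)
    (hW : ∀ e, (G.sign e = false ↔ W (G.ends e).1 ≠ W (G.ends e).2)) (hC : C.Finite)
    (hdeg : ∀ v, Even (G.deg C v)) : Even (G.negCount C) := by
  let w : V → ZMod 2 := fun v => if W v then 1 else 0
  have hneg : ∀ e,
      (if G.sign e = false then 1 else 0 : ZMod 2) = w (G.ends e).1 + w (G.ends e).2 := by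
    intro e
    rw [if_congr (hW e) rfl rfl]
    cases h1 : W (G.ends e).1 <;> cases h2 : W (G.ends e).2 <;> simp only [w, h1, h2] <;> decide
  refine ZMod.natCast_eq_zero_iff_even.1 ?_
  calc (G.negCount C : ZMod 2)
      = ∑ᶠ e ∈ C, (if G.sign e = false then 1 else 0 : ZMod 2) := by
        rw [negCount, finsum_mem_eq_finite_toFinset_sum _ hC, ← Finset.natCast_card_filter,
          ← Set.ncard_coe_finset]
        congr; ext; simp
    _ = ∑ v, G.deg C v • w v := by simp_rw [hneg]; exact finsum_mem_add_ends hC w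
    _ = 0 := Finset.sum_eq_zero fun v _ => by
        obtain ⟨k, hk⟩ := hdeg v
        rw [hk, add_smul, CharTwo.add_self_eq_zero]

end Coloring

lemma IsCycle.even_deg {C : Set E} (hC : G.IsCycle C) (v : V) : Even (G.deg C v) := by
  by_cases hv : v ∈ G.verts C
  · rw [hC.2.2 v hv]; exact even_two
  · rw [deg_eq_finsum_incidence, finsum_mem_eq_zero_of_forall_eq_zero fun e he => ?_]
    · exact .zero
    · have h1 : (G.ends e).1 ≠ v := fun h1 => hv ⟨e, he, Or.inl h1⟩
      have h2 : (G.ends e).2 ≠ v := fun h2 => hv ⟨e, he, Or.inr h2⟩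
      simp [incidence, h1, h2]

theorem balanced_of_coloring [Fintype V] [Finite E] (W : V → Bool)
    (hW : ∀ e, (G.sign e = false ↔ W (G.ends e).1 ≠ W (G.ends e).2)) : G.Balanced :=
  fun C hC => even_negCount_of_coloring W hW C.toFinite hC.even_deg

end SignedGraph

theorem stmt16_general {V E : Type*} [Fintype V] [Fintype E] (G : SignedGraph V E) :
    G.Balanced ↔ ∃ W : V → Bool,
      ∀ e, (G.sign e = false ↔ W (G.ends e).1 ≠ W (G.ends e).2) :=
  ⟨SignedGraph.Balanced.exists_coloring, fun ⟨W, hW⟩ => SignedGraph.balanced_of_coloring W hW⟩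

theorem stmt16 {V E : Type*} [Fintype V] [Fintype E] (G : SignedGraph V E)
    (hloop : ∀ e, (G.ends e).1 ≠ (G.ends e).2)
    (hsimple : ∀ e f, (G.ends e = G.ends f ∨ G.ends e = Prod.swap (G.ends f)) → e = f) :
    G.Balanced ↔ ∃ W : V → Bool,
      ∀ e, (G.sign e = false ↔ W (G.ends e).1 ≠ W (G.ends e).2) :=
  stmt16_general G
end
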